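/- arXiv:1103.5182 — 2 statements merged into one kernel-verified Lean document; each statement's English description precedes it below -/
import Mathlib

section
/- Let s ≥ 1 and r ≥ 2s−1 be integers, and let σ_0,…,σ_{r−1} be real numbers satisfying j Σ_{v=0}^{r−1} σ_v (r−v)^{j−1} = r^j − (−1)^j β_j for every j = 1,…,2s−1. Then for every integer n ≥ 2r and every real polynomial p of degree at most 2s−1, the trapezoid rule with end corrections is exact: I_n(p) = ∫_0^1 p(x) dx. -/
/-!
On the integer grid `0, …, n` and by linearity, it suffices to show that the rule sums `x ^ k`,
`k ≤ 2s - 1`, to `n ^ (k + 1) / (k + 1)`. Expanding `v ^ k` around `r` and `(n - v) ^ k` around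
`n - r` writes both end sums through the moments `∑ σ_v (r - v) ^ j`, `j ≤ k`. The accuracy
conditions fix these moments for `j ≤ 2s - 2`; the free top moment `j = k = 2s - 1` enters with the
coefficient `(-1) ^ k + 1`, which vanishes as `k` is odd. With the moments fixed, Faulhaber's
formula, once with `B_j` and once with `B'_j = (-1) ^ j B_j`, turns the two end sums into power
sums that combine with the interior sum into `n ^ (k + 1) / (k + 1)`.
-/

open Finset

theorem Nat.cast_choose_mul_succ_div_succ {K : Type*} [Field K] [CharZero K] (k j : ℕ) :
    (k.choose j : K) * (k + 1) / (j + 1) = (k + 1).choose (j + 1) := by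
  rw [div_eq_iff (Nat.cast_add_one_ne_zero j)]
  exact_mod_cast (mul_comm _ _).trans (Nat.add_one_mul_choose_eq k j)

theorem sum_range_neg_one_pow_mul_choose_succ {R : Type*} [CommRing R] (k : ℕ) :
    ∑ j ∈ range (k + 1), (-1 : R) ^ j * (k + 1).choose (j + 1) = 1 := by
  have h := Int.alternating_sum_range_choose_of_ne (Nat.succ_ne_zero k)
  simp only [sum_range_succ' _ (k + 1), pow_succ, mul_neg_one, neg_mul, sum_neg_distrib] at h
  have h' : ∑ j ∈ range (k + 1), (-1 : ℤ) ^ j * (k + 1).choose (j + 1) = 1 := by simp at h; linarith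
  exact_mod_cast congrArg (Int.cast : ℤ → R) h'

theorem sum_range_mul_choose_succ_mul_pow {R : Type*} [CommRing R] (b : ℕ → R) (a : R) (k : ℕ) :
    ∑ j ∈ range (k + 1), b (j + 1) * (k + 1).choose (j + 1) * a ^ (k - j) =
      ∑ i ∈ range (k + 1), b i * (k + 1).choose i * a ^ (k + 1 - i) + b (k + 1) -
        b 0 * a ^ (k + 1) := by
  have hlast := sum_range_succ (fun i => b i * (k + 1).choose i * a ^ (k + 1 - i)) (k + 1)
  have hfirst := sum_range_succ' (fun i => b i * (k + 1).choose i * a ^ (k + 1 - i)) (k + 1)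
  simp only [Nat.choose_self, Nat.sub_self, pow_zero, Nat.add_sub_add_right, Nat.choose_zero_right,
    Nat.sub_zero, Nat.cast_one, mul_one] at hlast hfirst
  rw [← sub_eq_iff_eq_add] at hfirst
  rw [← hlast, ← hfirst]

theorem Finset.sum_mul_add_pow {ι R : Type*} [CommSemiring R] (s : Finset ι) (w x : ι → R) (c : R)
    (k : ℕ) : ∑ i ∈ s, w i * (x i + c) ^ k =
      ∑ j ∈ range (k + 1), k.choose j * c ^ (k - j) * ∑ i ∈ s, w i * x i ^ j := by
  simp_rw [add_pow, mul_sum]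
  rw [sum_comm]
  exact sum_congr rfl fun j _ => sum_congr rfl fun i _ => by ring

theorem LinearMap.apply_eq_integral_eval_of_apply_X_pow {L : Polynomial ℝ →ₗ[ℝ] ℝ} {a b : ℝ}
    {N : ℕ} (hL : ∀ k < N, L (Polynomial.X ^ k) = ∫ x in a..b, x ^ k) {p : Polynomial ℝ}
    (hp : p.natDegree < N) : L p = ∫ x in a..b, p.eval x := by
  simp_rw [p.eval_eq_sum_range' hp]
  conv_lhs => rw [p.as_sum_range_C_mul_X_pow' hp]
  rw [map_sum, intervalIntegral.integral_finsetSum fun k _ =>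
    (by fun_prop : Continuous fun x : ℝ => p.coeff k * x ^ k).intervalIntegrable a b]
  refine sum_congr rfl fun k hk => ?_
  rw [← Polynomial.smul_eq_C_mul, map_smul, hL k (Finset.mem_range.1 hk), smul_eq_mul,
    intervalIntegral.integral_const_mul]

/-- The moment `∑ v < r, σ v * (r - v) ^ j` that the accuracy condition of order `j + 1` demands. -/
def exactEndMoment (r j : ℕ) : ℚ := ((r : ℚ) ^ (j + 1) - bernoulli' (j + 1)) / (j + 1)

theorem sum_choose_mul_neg_one_pow_mul_exactEndMoment (k r : ℕ) :
    (k + 1) * ∑ j ∈ range (k + 1),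
        k.choose j * ((-1) ^ j * (r : ℚ) ^ (k - j)) * exactEndMoment r j =
      (k + 1) * ∑ v ∈ range r, (v : ℚ) ^ k + bernoulli (k + 1) := by
  have hterm : ∀ j ∈ range (k + 1),
      (k + 1) * (k.choose j * ((-1) ^ j * (r : ℚ) ^ (k - j)) * exactEndMoment r j) =
        (-1) ^ j * (k + 1).choose (j + 1) * (r : ℚ) ^ (k + 1) +
          bernoulli (j + 1) * (k + 1).choose (j + 1) * (r : ℚ) ^ (k - j) := by
    intro j hj
    have hpow : (r : ℚ) ^ (k - j) * r ^ (j + 1) = r ^ (k + 1) := by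
      rw [← pow_add]; congr 1; grind
    have hsign : (-1 : ℚ) ^ j * (-1) ^ (j + 1) = -1 := by
      rw [← pow_add, Odd.neg_one_pow ⟨j, by ring⟩]
    rw [exactEndMoment, bernoulli'_eq_bernoulli]
    calc _ = (k.choose j * (k + 1) / (j + 1) : ℚ) *
          ((-1) ^ j * (r : ℚ) ^ (k - j) * (r ^ (j + 1) - (-1) ^ (j + 1) * bernoulli (j + 1))) := by
          ring
      _ = _ := by
          rw [Nat.cast_choose_mul_succ_div_succ]
          linear_combination ((k + 1).choose (j + 1) : ℚ) *
            ((-1) ^ j * hpow - (r : ℚ) ^ (k - j) * bernoulli (j + 1) * hsign)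
  have hfaulhaber := sum_range_pow r k
  rw [← sum_div, eq_div_iff (Nat.cast_add_one_ne_zero k)] at hfaulhaber
  rw [mul_sum, sum_congr rfl hterm, sum_add_distrib, ← sum_mul,
    sum_range_neg_one_pow_mul_choose_succ, sum_range_mul_choose_succ_mul_pow, bernoulli_zero,
    ← hfaulhaber]
  ring

theorem sum_choose_mul_pow_mul_exactEndMoment (k r m : ℕ) :
    (k + 1) * ∑ j ∈ range (k + 1), k.choose j * (m : ℚ) ^ (k - j) * exactEndMoment r j =
      (m + r) ^ (k + 1) - (k + 1) * ∑ v ∈ Ico 1 (m + 1), (v : ℚ) ^ k - bernoulli' (k + 1) := by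
  have hterm : ∀ j ∈ range (k + 1),
      (k + 1) * (k.choose j * (m : ℚ) ^ (k - j) * exactEndMoment r j) =
        (r : ℚ) ^ (j + 1) * (m : ℚ) ^ (k + 1 - (j + 1)) * (k + 1).choose (j + 1) -
          bernoulli' (j + 1) * (k + 1).choose (j + 1) * (m : ℚ) ^ (k - j) := by
    intro j _
    rw [exactEndMoment, Nat.add_sub_add_right]
    calc _ = (k.choose j * (k + 1) / (j + 1) : ℚ) *
          ((m : ℚ) ^ (k - j) * (r ^ (j + 1) - bernoulli' (j + 1))) := by ring
      _ = _ := by rw [Nat.cast_choose_mul_succ_div_succ]; ring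
  have hbinom :=
    sum_range_succ' (fun i => (r : ℚ) ^ i * (m : ℚ) ^ (k + 1 - i) * (k + 1).choose i) (k + 1)
  rw [← add_pow, add_comm (r : ℚ)] at hbinom
  simp only [pow_zero, one_mul, Nat.sub_zero, Nat.choose_zero_right, Nat.cast_one, mul_one]
    at hbinom
  have hfaulhaber := sum_Ico_pow m k
  rw [← sum_div, eq_div_iff (Nat.cast_add_one_ne_zero k)] at hfaulhaber
  rw [mul_sum, sum_congr rfl hterm, sum_sub_distrib, sum_range_mul_choose_succ_mul_pow,
    bernoulli'_zero, ← hfaulhaber]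
  linarith

theorem sum_choose_mul_exactEndMoment_add_sum_Icc_pow (k r m : ℕ) (hrm : r ≤ m + 1) :
    ∑ j ∈ range (k + 1), k.choose j * ((-1) ^ j * (r : ℚ) ^ (k - j) + (m : ℚ) ^ (k - j)) *
        exactEndMoment r j + ∑ v ∈ Icc r m, (v : ℚ) ^ k =
      (m + r) ^ (k + 1) / (k + 1) := by
  have hends := congrArg₂ (· + ·) (sum_choose_mul_neg_one_pow_mul_exactEndMoment k r)
    (sum_choose_mul_pow_mul_exactEndMoment k r m)
  simp only [← mul_add, ← sum_add_distrib, ← add_mul] at hends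
  have hsplit : ∑ v ∈ range r, (v : ℚ) ^ k + ∑ v ∈ Icc r m, (v : ℚ) ^ k =
      0 ^ k + ∑ v ∈ Ico 1 (m + 1), (v : ℚ) ^ k := by
    rw [← Ico_add_one_right_eq_Icc, sum_range_add_sum_Ico _ hrm,
      sum_range_eq_add_Ico _ (by omega)]
    simp
  have hk : (k + 1 : ℚ) * 0 ^ k + bernoulli (k + 1) - bernoulli' (k + 1) = 0 := by
    rcases k with _ | k
    · norm_num
    · simp [bernoulli_eq_bernoulli'_of_ne_one]
  rw [eq_div_iff (Nat.cast_add_one_ne_zero k)]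
  linear_combination hends + (k + 1 : ℚ) * hsplit + hk

theorem sum_corrected_trapezoid_pow {s r : ℕ} (hs : 1 ≤ s) {σ : ℕ → ℝ}
    (hσ : ∀ j : ℕ, 1 ≤ j → j ≤ 2 * s - 1 →
      (j : ℝ) * ∑ v ∈ range r, σ v * ((r - v : ℕ) : ℝ) ^ (j - 1) =
        (r : ℝ) ^ j - (-1 : ℝ) ^ j * (bernoulli j : ℝ))
    {n : ℕ} (hn : 2 * r ≤ n) {k : ℕ} (hk : k ≤ 2 * s - 1) :
    ∑ v ∈ range r, σ v * (v : ℝ) ^ k + ∑ v ∈ Icc r (n - r), (v : ℝ) ^ k +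
        ∑ v ∈ range r, σ v * ((n - v : ℕ) : ℝ) ^ k = n ^ (k + 1) / (k + 1) := by
  obtain ⟨m, rfl⟩ : ∃ m, n = m + r := ⟨n - r, by omega⟩
  set μ : ℕ → ℝ := fun j => ∑ v ∈ range r, σ v * ((r - v : ℕ) : ℝ) ^ j
  have hleft : ∑ v ∈ range r, σ v * (v : ℝ) ^ k =
      ∑ j ∈ range (k + 1), k.choose j * ((-1) ^ j * (r : ℝ) ^ (k - j)) * μ j := by
    rw [sum_congr rfl fun v hv => by
      rw [show (v : ℝ) = -((r - v : ℕ) : ℝ) + r by rw [Nat.cast_sub (mem_range.1 hv).le]; ring],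
      sum_mul_add_pow]
    refine sum_congr rfl fun j _ => ?_
    simp only [μ, mul_sum]
    exact sum_congr rfl fun v _ => by rw [neg_pow]; ring
  have hright : ∑ v ∈ range r, σ v * ((m + r - v : ℕ) : ℝ) ^ k =
      ∑ j ∈ range (k + 1), k.choose j * (m : ℝ) ^ (k - j) * μ j := by
    rw [sum_congr rfl fun v hv => by
      rw [show m + r - v = (r - v) + m by have := mem_range.1 hv; omega, Nat.cast_add],
      sum_mul_add_pow]
  have hμ : ∀ j < 2 * s - 1, μ j = exactEndMoment r j := by
    intro j hj
    have h := hσ (j + 1) (by omega) (by omega)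
    simp only [Nat.add_sub_cancel] at h
    rw [exactEndMoment, bernoulli'_eq_bernoulli]
    push_cast
    rw [eq_div_iff (Nat.cast_add_one_ne_zero j)]
    push_cast at h
    linear_combination h
  have hends : ∀ j ∈ range (k + 1),
      k.choose j * ((-1) ^ j * (r : ℝ) ^ (k - j) + (m : ℝ) ^ (k - j)) * μ j =
        k.choose j * ((-1) ^ j * (r : ℝ) ^ (k - j) + (m : ℝ) ^ (k - j)) * exactEndMoment r j := by
    intro j hj
    rcases lt_or_ge j (2 * s - 1) with hj' | hj'
    · rw [hμ j hj']
    · obtain rfl : j = 2 * s - 1 := by have := mem_range.1 hj; omega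
      obtain rfl : k = 2 * s - 1 := by have := mem_range.1 hj; omega
      rw [Odd.neg_one_pow ⟨s - 1, by omega⟩, Nat.sub_self]
      ring
  have hmaster : ∑ j ∈ range (k + 1),
        k.choose j * ((-1) ^ j * (r : ℝ) ^ (k - j) + (m : ℝ) ^ (k - j)) * (exactEndMoment r j : ℝ) +
      ∑ v ∈ Icc r m, (v : ℝ) ^ k = (m + r) ^ (k + 1) / (k + 1) := by
    have h := congrArg (Rat.cast : ℚ → ℝ)
      (sum_choose_mul_exactEndMoment_add_sum_Icc_pow k r m (by omega))
    push_cast at h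
    exact h
  rw [← sum_congr rfl hends] at hmaster
  rw [Nat.add_sub_cancel, hleft, hright, Nat.cast_add, ← hmaster]
  simp only [mul_add, add_mul, sum_add_distrib]
  ring

noncomputable def correctedTrapezoid (σ : ℕ → ℝ) (r n : ℕ) : Polynomial ℝ →ₗ[ℝ] ℝ :=
  (1 / (n : ℝ)) • (∑ v ∈ range r, σ v • Polynomial.leval ((v : ℝ) / n) +
    ∑ v ∈ Icc r (n - r), Polynomial.leval ((v : ℝ) / n) +
    ∑ v ∈ range r, σ v • Polynomial.leval (((n - v : ℕ) : ℝ) / n))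

theorem correctedTrapezoid_apply (σ : ℕ → ℝ) (r n : ℕ) (p : Polynomial ℝ) :
    correctedTrapezoid σ r n p = 1 / (n : ℝ) *
      ((∑ v ∈ range r, σ v * p.eval ((v : ℝ) / n)) + (∑ v ∈ Icc r (n - r), p.eval ((v : ℝ) / n)) +
        ∑ v ∈ range r, σ v * p.eval (((n - v : ℕ) : ℝ) / n)) := by
  simp [correctedTrapezoid, LinearMap.sum_apply, mul_add]

theorem correctedTrapezoid_X_pow (σ : ℕ → ℝ) (r n k : ℕ) :
    correctedTrapezoid σ r n (Polynomial.X ^ k) =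
      (∑ v ∈ range r, σ v * (v : ℝ) ^ k + ∑ v ∈ Icc r (n - r), (v : ℝ) ^ k +
        ∑ v ∈ range r, σ v * ((n - v : ℕ) : ℝ) ^ k) / n ^ (k + 1) := by
  simp only [correctedTrapezoid_apply, Polynomial.eval_pow, Polynomial.eval_X, div_pow, mul_div,
    ← sum_div]
  ring

/-- if the boundary weights `σ_0, …, σ_{r-1}` satisfy the accuracy
conditions for `j = 1, …, 2s−1`, then the trapezoid rule with end corrections is
exact on every polynomial of degree at most `2s−1`, for every `n ≥ 2r`. -/
theorem trapezoid_end_corrections_exact_polynomials (s r : ℕ) (hs : 1 ≤ s)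
    (hr : 2 * s - 1 ≤ r) (σ : ℕ → ℝ)
    (hσ : ∀ j : ℕ, 1 ≤ j → j ≤ 2 * s - 1 →
      (j : ℝ) * ∑ v ∈ Finset.range r, σ v * ((r - v : ℕ) : ℝ) ^ (j - 1) =
        (r : ℝ) ^ j - (-1 : ℝ) ^ j * (bernoulli j : ℝ)) :
    ∀ n : ℕ, 2 * r ≤ n → ∀ p : Polynomial ℝ, p.natDegree ≤ 2 * s - 1 →
      (1 / (n : ℝ)) *
          ((∑ v ∈ Finset.range r, σ v * p.eval ((v : ℝ) / (n : ℝ))) +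
           (∑ v ∈ Finset.Icc r (n - r), p.eval ((v : ℝ) / (n : ℝ))) +
           ∑ v ∈ Finset.range r, σ v * p.eval (((n - v : ℕ) : ℝ) / (n : ℝ))) =
        ∫ x in (0 : ℝ)..1, p.eval x := by
  intro n hn p hp
  have hn0 : (n : ℝ) ≠ 0 := by norm_cast; omega
  rw [← correctedTrapezoid_apply]
  refine LinearMap.apply_eq_integral_eval_of_apply_X_pow (N := 2 * s) (fun k hk => ?_) (by omega)
  rw [correctedTrapezoid_X_pow, sum_corrected_trapezoid_pow hs hσ hn (by omega), integral_pow]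
  field_simp
  ring
end

section
/- Let s ≥ 1 be an integer and let α_v = (-1)^{v+1} (s!)^2 / (v (s+v)! (s-v)!) for v = 1,…,s. Then for every integer j with 1 ≤ j ≤ 2s−1, Σ_{v=1}^{s} α_v Σ_{w=0}^{v−1} ( w^j + (w−v)^j ) = β_j. -/
/-!
The inner sum is `∑_{-v ≤ u < v} u ^ j`, so telescoping the Bernoulli polynomial `B_{j+1}`
(`B_{j+1}(x + 1) - B_{j+1}(x) = (j + 1) x ^ j`) turns it into `(B_{j+1}(v) - B_{j+1}(-v)) / (j + 1)`,
i.e. `∑_i β_i C(j+1, i) / (j+1) · (v^m - (-v)^m)` with `m = j + 1 - i`. Since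
`α_v v = (-1)^(v+1) C(2s, s+v) / C(2s, s)`, pairing the terms `s ± v` of the vanishing `2s`-th
finite difference of `x ↦ x ^ k` (`k < 2s`) shows that `∑_v α_v (v^m - (-v)^m)` is `1` for `m = 1`
and `0` for every other `m ≤ 2s`. Hence only the term `i = j` survives, and it is `β_j`.
-/

open Finset

theorem Finset.sum_range_two_mul_add_one {M : Type*} [AddCommMonoid M] (f : ℕ → M) (n : ℕ) :
    ∑ i ∈ range (2 * n + 1), f i = f n + ∑ v ∈ Icc 1 n, (f (n + v) + f (n - v)) := by
  have reflect : ∑ k ∈ range n, f (n - (1 + k)) = ∑ k ∈ range n, f k := by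
    rw [← sum_range_reflect f n]
    exact sum_congr rfl fun k _ => by rw [Nat.sub_sub]
  rw [show 2 * n + 1 = n + (n + 1) by ring, sum_range_add, sum_range_succ',
    ← Ico_add_one_right_eq_Icc, sum_Ico_eq_sum_range, Nat.add_sub_cancel, sum_add_distrib,
    reflect]
  simp only [add_zero, add_comm 1]
  abel

theorem neg_one_pow_sub_of_le {R : Type*} [Ring R] {m n : ℕ} (h : m ≤ n) :
    (-1 : R) ^ (n - m) = (-1) ^ n * (-1) ^ m := by
  obtain ⟨d, rfl⟩ := Nat.exists_eq_add_of_le h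
  rw [Nat.add_sub_cancel_left, pow_add, ((Commute.neg_one_left _).pow_left m).eq, mul_assoc,
    ← pow_add, ← two_mul, pow_mul, neg_one_sq, one_pow, mul_one]

-- The `2n`-th finite difference of `x ↦ x ^ k` at `-n`, with the terms at `n ± v` paired.
theorem sum_neg_one_pow_mul_choose_mul_pow_add_neg_pow {R : Type*} [CommRing R] {n k : ℕ}
    (hk : k < 2 * n) :
    ∑ v ∈ Icc 1 n, (-1 : R) ^ v * ((2 * n).choose (n + v) : R) * ((v : R) ^ k + (-(v : R)) ^ k) =
      -(((2 * n).choose n : R) * 0 ^ k) := by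
  have hdiff := congrFun (fwdDiff_iter_pow_eq_zero_of_lt (R := R) hk) (-n)
  rw [fwdDiff_iter_eq_sum_shift, Finset.sum_range_two_mul_add_one] at hdiff
  have hpair : ∀ v ∈ Icc 1 n,
      ((-1 : ℤ) ^ (2 * n - (n + v)) * ((2 * n).choose (n + v) : ℤ)) • (-(n : R) + (n + v) • 1) ^ k +
        ((-1 : ℤ) ^ (2 * n - (n - v)) * ((2 * n).choose (n - v) : ℤ)) •
          (-(n : R) + (n - v) • 1) ^ k =
      (-1) ^ n * ((-1 : R) ^ v * ((2 * n).choose (n + v) : R) * ((v : R) ^ k + (-(v : R)) ^ k)) := by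
    intro v hv
    have hvn : v ≤ n := (mem_Icc.mp hv).2
    rw [show 2 * n - (n + v) = n - v by omega, show 2 * n - (n - v) = n + v by omega,
      neg_one_pow_sub_of_le hvn, show (2 * n).choose (n - v) = (2 * n).choose (n + v) by
        rw [show 2 * n = (n - v) + (n + v) by omega, Nat.choose_symm_add]]
    simp only [zsmul_eq_mul, nsmul_eq_mul, mul_one, Nat.cast_add, Nat.cast_sub hvn]
    push_cast
    ring
  rw [sum_congr rfl hpair, ← mul_sum, show 2 * n - n = n by omega, zsmul_eq_mul,
    nsmul_eq_mul, mul_one, neg_add_cancel, Pi.zero_apply] at hdiff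
  push_cast at hdiff
  rw [mul_assoc, ← mul_add, (isUnit_one.neg.pow n).mul_right_eq_zero] at hdiff
  linear_combination hdiff

noncomputable def centeredDiffCoeff (s v : ℕ) : ℝ :=
  (-1) ^ (v + 1) * (s.factorial : ℝ) ^ 2 / ((v : ℝ) * ((s + v).factorial : ℝ) * ((s - v).factorial : ℝ))

theorem centeredDiffCoeff_mul_self {s v : ℕ} (hv : v ∈ Icc 1 s) :
    centeredDiffCoeff s v * v = -((-1) ^ v * ((2 * s).choose (s + v) : ℝ)) / (2 * s).choose s := by
  obtain ⟨hv1, hvs⟩ := mem_Icc.mp hv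
  have hchoose : ((2 * s).choose (s + v) : ℝ) * (s + v).factorial * (s - v).factorial =
      (2 * s).factorial := by
    exact_mod_cast (show 2 * s - (s + v) = s - v by omega) ▸
      Nat.choose_mul_factorial_mul_factorial (show s + v ≤ 2 * s by omega)
  have hcentral : ((2 * s).choose s : ℝ) * s.factorial * s.factorial = (2 * s).factorial := by
    exact_mod_cast (show 2 * s - s = s by omega) ▸
      Nat.choose_mul_factorial_mul_factorial (show s ≤ 2 * s by omega)
  have hv0 : (v : ℝ) ≠ 0 := by positivity
  have hc0 : ((2 * s).choose s : ℝ) ≠ 0 := by exact_mod_cast (Nat.choose_pos (by omega)).ne'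
  rw [centeredDiffCoeff, eq_div_iff hc0, pow_succ]
  field_simp
  linear_combination hchoose - hcentral

theorem sum_centeredDiffCoeff_mul_pow_sub_neg_pow {s m : ℕ} (hm : m ≤ 2 * s) :
    ∑ v ∈ Icc 1 s, centeredDiffCoeff s v * ((v : ℝ) ^ m - (-(v : ℝ)) ^ m) =
      if m = 1 then 1 else 0 := by
  obtain _ | k := m
  · simp
  have hc0 : ((2 * s).choose s : ℝ) ≠ 0 := by exact_mod_cast (Nat.choose_pos (by omega)).ne'
  calc ∑ v ∈ Icc 1 s, centeredDiffCoeff s v * ((v : ℝ) ^ (k + 1) - (-(v : ℝ)) ^ (k + 1))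
      = ∑ v ∈ Icc 1 s, centeredDiffCoeff s v * v * ((v : ℝ) ^ k + (-(v : ℝ)) ^ k) :=
        sum_congr rfl fun v _ => by ring
    _ = -(∑ v ∈ Icc 1 s, (-1 : ℝ) ^ v * ((2 * s).choose (s + v) : ℝ) *
          ((v : ℝ) ^ k + (-(v : ℝ)) ^ k)) / (2 * s).choose s := by
        rw [neg_div, sum_div, ← sum_neg_distrib]
        exact sum_congr rfl fun v hv => by rw [centeredDiffCoeff_mul_self hv]; ring
    _ = if k + 1 = 1 then 1 else 0 := by
        rw [sum_neg_one_pow_mul_choose_mul_pow_add_neg_pow (by omega), neg_neg,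
          mul_div_cancel_left₀ _ hc0, zero_pow_eq]
        simp

theorem Polynomial.bernoulli_eval_eq_sum (n : ℕ) (x : ℚ) :
    (bernoulli n).eval x = ∑ i ∈ range (n + 1), _root_.bernoulli i * n.choose i * x ^ (n - i) := by
  simp [bernoulli, Polynomial.eval_finsetSum]

theorem succ_mul_sum_range_pow_add_sub_pow (v j : ℕ) :
    (j + 1) * ∑ w ∈ range v, ((w : ℚ) ^ j + ((w : ℚ) - v) ^ j) =
      (Polynomial.bernoulli (j + 1)).eval (v : ℚ) - (Polynomial.bernoulli (j + 1)).eval (-v : ℚ) := by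
  set B := Polynomial.bernoulli (j + 1)
  have step (x : ℚ) : (j + 1) * x ^ j = B.eval (x + 1) - B.eval x := by
    rw [add_comm x, Polynomial.bernoulli_eval_one_add, Nat.add_sub_cancel]
    push_cast
    ring
  have hpos := sum_range_sub (fun w => B.eval (w : ℚ)) v
  have hneg := sum_range_sub (fun w => B.eval ((w : ℚ) - v)) v
  simp only [← step, Nat.cast_add, Nat.cast_one, add_sub_right_comm] at hpos hneg
  push_cast at hpos hneg
  rw [mul_sum]
  simp only [mul_add, sum_add_distrib, hpos, hneg, sub_self, zero_sub]
  ring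

theorem sum_range_pow_add_sub_pow (v j : ℕ) :
    ∑ w ∈ range v, ((w : ℝ) ^ j + ((w : ℝ) - v) ^ j) =
      ∑ i ∈ range (j + 2), (bernoulli i : ℝ) * (j + 1).choose i / (j + 1) *
        ((v : ℝ) ^ (j + 1 - i) - (-(v : ℝ)) ^ (j + 1 - i)) := by
  have h := succ_mul_sum_range_pow_add_sub_pow v j
  rw [Polynomial.bernoulli_eval_eq_sum, Polynomial.bernoulli_eval_eq_sum, ← sum_sub_distrib] at h
  have hq : ∑ w ∈ range v, ((w : ℚ) ^ j + ((w : ℚ) - v) ^ j) =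
      ∑ i ∈ range (j + 2), bernoulli i * (j + 1).choose i / (j + 1) *
        ((v : ℚ) ^ (j + 1 - i) - (-(v : ℚ)) ^ (j + 1 - i)) := by
    rw [eq_comm, ← mul_right_inj' (show (j + 1 : ℚ) ≠ 0 by positivity), h, mul_sum]
    refine sum_congr rfl fun i _ => ?_
    field_simp
  exact_mod_cast hq

theorem sum_centeredDiffCoeff_mul_sum_range_pow_add_sub_pow {s j : ℕ} (hj : j < 2 * s) :
    ∑ v ∈ Icc 1 s, centeredDiffCoeff s v * ∑ w ∈ range v, ((w : ℝ) ^ j + ((w : ℝ) - v) ^ j) =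
      bernoulli j := by
  simp only [sum_range_pow_add_sub_pow, mul_sum]
  rw [sum_comm]
  calc ∑ i ∈ range (j + 2), ∑ v ∈ Icc 1 s, centeredDiffCoeff s v * ((bernoulli i : ℝ) *
          (j + 1).choose i / (j + 1) * ((v : ℝ) ^ (j + 1 - i) - (-(v : ℝ)) ^ (j + 1 - i)))
      = ∑ i ∈ range (j + 2), (bernoulli i : ℝ) * (j + 1).choose i / (j + 1) *
          if j + 1 - i = 1 then 1 else 0 := by
        refine sum_congr rfl fun i _ => ?_
        rw [← sum_centeredDiffCoeff_mul_pow_sub_neg_pow (s := s) (by omega), mul_sum]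
        exact sum_congr rfl fun v _ => by ring
    _ = bernoulli j := by
        rw [sum_eq_single_of_mem j (by simp) fun i hi hij => by
          rw [if_neg (by simp only [mem_range] at hi; omega), mul_zero]]
        rw [if_pos (by omega), Nat.choose_succ_self_right]
        push_cast
        field_simp

theorem alpha_bernoulli_identity_general (s : ℕ) (α : ℕ → ℝ)
    (hα : ∀ v : ℕ, α v = (-1 : ℝ) ^ (v + 1) * (Nat.factorial s : ℝ) ^ 2 /
      ((v : ℝ) * (Nat.factorial (s + v) : ℝ) * (Nat.factorial (s - v) : ℝ))) :
    ∀ j : ℕ, 1 ≤ j → j ≤ 2 * s - 1 →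
      ∑ v ∈ Finset.Icc 1 s, α v *
          ∑ w ∈ Finset.range v, ((w : ℝ) ^ j + ((w : ℝ) - (v : ℝ)) ^ j) =
        (bernoulli j : ℝ) := by
  intro j hj1 hj2
  obtain rfl : α = centeredDiffCoeff s := funext hα
  exact sum_centeredDiffCoeff_mul_sum_range_pow_add_sub_pow (by omega)

/-- for the centered-difference coefficients `α v` of order `2s`,
`∑_{v=1}^s α v ∑_{w=0}^{v-1} (w^j + (w−v)^j) = β_j` for every `1 ≤ j ≤ 2s−1`,
where `β_j` is the `j`-th Bernoulli number (with `β_1 = −1/2`). -/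
theorem alpha_bernoulli_identity (s : ℕ) (hs : 1 ≤ s) (α : ℕ → ℝ)
    (hα : ∀ v : ℕ, α v = (-1 : ℝ) ^ (v + 1) * (Nat.factorial s : ℝ) ^ 2 /
      ((v : ℝ) * (Nat.factorial (s + v) : ℝ) * (Nat.factorial (s - v) : ℝ))) :
    ∀ j : ℕ, 1 ≤ j → j ≤ 2 * s - 1 →
      ∑ v ∈ Finset.Icc 1 s, α v *
          ∑ w ∈ Finset.range v, ((w : ℝ) ^ j + ((w : ℝ) - (v : ℝ)) ^ j) =
        (bernoulli j : ℝ) :=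
  alpha_bernoulli_identity_general s α hα
end
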